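/- Generalized Lieb inequality for integer powers: for every n ∈ ℕ, every integer s ≥ 1, and every unit vector ψ ∈ ℂ^(n+1), one has (n·s + 1) ∫ |⟨v_n(Ω), ψ⟩|^{2s} dΩ/4π ≤ 1; moreover, for s ≥ 2 equality holds if and only if ψ is a coherent state. -/

import Mathlib

open MeasureTheory

/-- The Bloch coherent state of spin `n/2` with parameters `Ω = (p, φ)`:
components `(v_n(Ω))_k = √(binom n k) · p^(k/2) · (1-p)^((n-k)/2) · exp(-i k φ)`. -/
noncomputable def bloch (n : ℕ) (Ω : ℝ × ℝ) : EuclideanSpace ℂ (Fin (n + 1)) :=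
  WithLp.toLp 2 fun k => (↑(Real.sqrt (n.choose k) * Real.sqrt Ω.1 ^ (k : ℕ) *
      Real.sqrt (1 - Ω.1) ^ (n - (k : ℕ))) : ℂ) *
    Complex.exp (-((k : ℕ) : ℂ) * Complex.I * (Ω.2 : ℂ))

/-- A sphere point: `(p, φ) ∈ [0,1] × [0, 2π)`. -/
def IsSpherePt (Ω : ℝ × ℝ) : Prop :=
  Ω.1 ∈ Set.Icc (0 : ℝ) 1 ∧ Ω.2 ∈ Set.Ico (0 : ℝ) (2 * Real.pi)

/-- The overlap `⟨v_n(Ω), ψ⟩` (inner product conjugate-linear in the first argument). -/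
noncomputable def ov (n : ℕ) (Ω : ℝ × ℝ) (ψ : EuclideanSpace ℂ (Fin (n + 1))) : ℂ :=
  inner ℂ (bloch n Ω) ψ

/-- Normalized integral over the sphere: `∫ f(Ω) dΩ/4π = ∫_0^1 ∫_0^{2π} f(p,φ) dφ/(2π) dp`. -/
noncomputable def sphereInt (f : ℝ × ℝ → ℝ) : ℝ :=
  ∫ p in (0 : ℝ)..1, (∫ φ in (0 : ℝ)..(2 * Real.pi), f (p, φ)) / (2 * Real.pi)

/-- The Wehrl entropy of a state `ψ ∈ ℂ^(n+1)`. -/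
noncomputable def wehrl (n : ℕ) (ψ : EuclideanSpace ℂ (Fin (n + 1))) : ℝ :=
  -((n : ℝ) + 1) * sphereInt (fun Ω => ‖ov n Ω ψ‖ ^ 2 * Real.log (‖ov n Ω ψ‖ ^ 2))

/-- `ψ` is represented by the `n` sphere points `ω 1, …, ω n` with constant `c`:
`|⟨v_n(Ω), ψ⟩|² = c · ∏ k, |⟨v_1(Ω), v_1(ω k)⟩|²` for every sphere point `Ω`. -/
def Represents (n : ℕ) (ψ : EuclideanSpace ℂ (Fin (n + 1))) (ω : Fin n → ℝ × ℝ) (c : ℝ) :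
    Prop :=
  (∀ k, IsSpherePt (ω k)) ∧
    ∀ Ω, IsSpherePt Ω → ‖ov n Ω ψ‖ ^ 2 = c * ∏ k : Fin n, ‖ov 1 Ω (bloch 1 (ω k))‖ ^ 2

/-- Squared chordal distance between two sphere points (sphere of radius 1/2):
`d(ω, ω') = 1 - |⟨v_1(ω), v_1(ω')⟩|²`. -/
noncomputable def chord (ω ω' : ℝ × ℝ) : ℝ := 1 - ‖ov 1 ω (bloch 1 ω')‖ ^ 2

/-- `ψ` is a coherent state, i.e. `ψ = e^{iθ} v_n(Ω)` for some `θ` and some sphere point `Ω`. -/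
def IsCoherent (n : ℕ) (ψ : EuclideanSpace ℂ (Fin (n + 1))) : Prop :=
  ∃ (θ : ℝ) (Ω : ℝ × ℝ), IsSpherePt Ω ∧ ψ = Complex.exp ((θ : ℂ) * Complex.I) • bloch n Ω

/-!
Attach to `ψ` its Majorana polynomial `Q(z) = ∑ₖ √(n choose k) ψₖ zᵏ`. The overlap
`⟨v_n(Ω), ψ⟩` is the degree-`n` homogenization of `Q` evaluated at `(√p e^{iφ}, √(1-p))`, so its
`s`-th power is the degree-`ns` homogenization of `Qˢ` at the same point. For the degree-`N`
homogenization `R^{(N)}` of any `R`, integrating `|R^{(N)}(√p e^{iφ}, √(1-p))|²` first over `φ`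
(orthogonality of the `e^{imφ}`) and then over `p` (Beta integrals) gives `[R]²_N / (N+1)`, where
`[R]²_N = ∑ₘ |Rₘ|² / (N choose m)` is the squared Bombieri norm. Hence the left-hand side of the
inequality is `[Qˢ]²_{ns}`, while `[Q]²_n = ‖ψ‖² = 1`.

The Bombieri norm is submultiplicative: on each antidiagonal `i + j = m` this is the weighted
Cauchy–Schwarz inequality with weights `(N choose i)(M choose j)`, which sum to `(N+M choose m)` by
Vandermonde. So `[Qˢ]² ≤ 1`. For `s ≥ 2`, equality forces `[Q²]²_{2n} = 1`, i.e. equality in every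
one of these Cauchy–Schwarz inequalities; then `uₖ = Qₖ / (n choose k)` satisfies
`u_{i+1} u_j = u_i u_{j+1}`, so `uₖ = c αᵏ β^{n-k}` and `Q = c (αz + β)ⁿ`, the Majorana polynomial
of a multiple of a coherent state.
-/

section Sums

open Finset

section LagrangeIdentity

variable {ι E : Type*} [NormedAddCommGroup E] [InnerProductSpace ℝ E]

theorem sum_mul_sum_mul_norm_sq_sub_norm_sq_sum_smul (s : Finset ι) (w : ι → ℝ) (b : ι → E) :
    (∑ i ∈ s, w i) * (∑ i ∈ s, w i * ‖b i‖ ^ 2) - ‖∑ i ∈ s, w i • b i‖ ^ 2 =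
      (∑ i ∈ s, ∑ j ∈ s, w i * w j * ‖b i - b j‖ ^ 2) / 2 := by
  have hsq : ‖∑ i ∈ s, w i • b i‖ ^ 2 =
      ∑ i ∈ s, ∑ j ∈ s, w i * w j * inner ℝ (b i) (b j) := by
    simp only [← real_inner_self_eq_norm_sq, sum_inner, inner_sum, real_inner_smul_left,
      real_inner_smul_right]
    exact sum_congr rfl fun i _ => sum_congr rfl fun j _ => by rw [real_inner_comm]; ring
  have hleft : ∑ i ∈ s, ∑ j ∈ s, w i * w j * ‖b i‖ ^ 2 =
      (∑ i ∈ s, w i) * (∑ i ∈ s, w i * ‖b i‖ ^ 2) := by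
    rw [sum_mul_sum, sum_comm]
    exact sum_congr rfl fun i _ => sum_congr rfl fun j _ => by ring
  have hright : ∑ i ∈ s, ∑ j ∈ s, w i * w j * ‖b j‖ ^ 2 =
      (∑ i ∈ s, w i) * (∑ i ∈ s, w i * ‖b i‖ ^ 2) := by
    rw [sum_mul_sum]
    exact sum_congr rfl fun i _ => sum_congr rfl fun j _ => by ring
  simp only [norm_sub_sq_real, mul_add, mul_sub, sum_add_distrib, sum_sub_distrib, hleft, hright,
    hsq, mul_left_comm _ (2 : ℝ), ← mul_sum]
  ring

variable {s : Finset ι} {w : ι → ℝ}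

theorem norm_sq_sum_smul_le (hw : ∀ i ∈ s, 0 ≤ w i) (b : ι → E) :
    ‖∑ i ∈ s, w i • b i‖ ^ 2 ≤ (∑ i ∈ s, w i) * (∑ i ∈ s, w i * ‖b i‖ ^ 2) := by
  have hdefect : 0 ≤ ∑ i ∈ s, ∑ j ∈ s, w i * w j * ‖b i - b j‖ ^ 2 :=
    sum_nonneg fun i hi => sum_nonneg fun j hj => by
      have := hw i hi; have := hw j hj; positivity
  linarith [sum_mul_sum_mul_norm_sq_sub_norm_sq_sum_smul s w b]

theorem eq_of_norm_sq_sum_smul_eq (hw : ∀ i ∈ s, 0 ≤ w i) {b : ι → E}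
    (h : ‖∑ i ∈ s, w i • b i‖ ^ 2 = (∑ i ∈ s, w i) * (∑ i ∈ s, w i * ‖b i‖ ^ 2))
    {i j : ι} (hi : i ∈ s) (hj : j ∈ s) (hwi : 0 < w i) (hwj : 0 < w j) : b i = b j := by
  have hterm : ∀ i ∈ s, ∀ j ∈ s, 0 ≤ w i * w j * ‖b i - b j‖ ^ 2 := fun i hi j hj => by
    have := hw i hi; have := hw j hj; positivity
  have hzero : ∑ i ∈ s, ∑ j ∈ s, w i * w j * ‖b i - b j‖ ^ 2 = 0 := by
    linarith [sum_mul_sum_mul_norm_sq_sub_norm_sq_sum_smul s w b]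
  rw [sum_eq_zero_iff_of_nonneg fun i hi => sum_nonneg (hterm i hi)] at hzero
  have := (sum_eq_zero_iff_of_nonneg (hterm i hi)).1 (hzero i hi) j hj
  simpa [sub_eq_zero, hwi.ne', hwj.ne'] using this

end LagrangeIdentity

theorem Finset.sum_range_mul_sum_range_eq_sum_antidiagonal {R : Type*} [CommSemiring R]
    {N M : ℕ} {f g : ℕ → R} (hf : ∀ i, N < i → f i = 0) (hg : ∀ j, M < j → g j = 0) :
    (∑ i ∈ range (N + 1), f i) * (∑ j ∈ range (M + 1), g j) =
      ∑ m ∈ range (N + M + 1), ∑ x ∈ antidiagonal m, f x.1 * g x.2 := by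
  rw [sum_mul_sum, ← sum_product', ← sum_fiberwise_of_maps_to (g := fun x => x.1 + x.2)
    (t := range (N + M + 1)) fun x hx => by simp only [mem_product, mem_range] at hx ⊢; omega]
  refine sum_congr rfl fun m _ => sum_subset (fun x hx => by simp_all) fun x hx hx' => ?_
  rw [HasAntidiagonal.mem_antidiagonal] at hx
  simp only [mem_filter, mem_product, mem_range, hx, and_true, not_and_or, not_lt] at hx'
  rcases hx' with h | h
  · rw [hf _ h, zero_mul]
  · rw [hg _ h, mul_zero]

theorem exists_eq_mul_pow_mul_pow_of_mul_succ_eq {K : Type*} [Field K] {n : ℕ} {u : ℕ → K}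
    (h : ∀ i j, i < n → j < n → u (i + 1) * u j = u i * u (j + 1)) :
    ∃ c α β : K, ∀ k ≤ n, u k = c * α ^ k * β ^ (n - k) := by
  by_cases hz : ∀ k < n, u k = 0
  · refine ⟨u n, 1, 0, fun k hk => ?_⟩
    rcases hk.lt_or_eq with hk | rfl
    · rw [hz k hk, zero_pow (by omega), mul_zero]
    · simp
  push Not at hz
  obtain ⟨j, hj, huj⟩ := hz
  refine ⟨u 0, u (j + 1) / u j, 1, fun k hk => ?_⟩
  induction k with
  | zero => simp
  | succ k ih =>
    rw [one_pow, mul_one] at ih ⊢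
    rw [pow_succ, ← mul_assoc, ← ih (by omega), mul_div_assoc', eq_div_iff huj,
      h k j (by omega) hj]

end Sums

section Integrals

open Finset Real

theorem integral_pow_mul_one_sub_pow (a b : ℕ) :
    ∫ x in (0 : ℝ)..1, x ^ a * (1 - x) ^ b =
      (a.factorial * b.factorial / (a + b + 1).factorial : ℝ) := by
  have hbeta := Complex.betaIntegral_eq_Gamma_mul_div (a + 1) (b + 1) (by simp; positivity)
    (by simp; positivity)
  rw [show (a + 1 : ℂ) + (b + 1) = ((a + b + 1 : ℕ) : ℂ) + 1 by push_cast; ring,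
    Complex.Gamma_nat_eq_factorial, Complex.Gamma_nat_eq_factorial,
    Complex.Gamma_nat_eq_factorial, Complex.betaIntegral] at hbeta
  apply Complex.ofReal_injective
  rw [← intervalIntegral.integral_ofReal]
  push_cast
  rw [← hbeta]
  refine intervalIntegral.integral_congr fun x _ => ?_
  simp only [add_sub_cancel_right]
  norm_cast

theorem integral_exp_mul_I_pow_mul_conj (m m' : ℕ) :
    ∫ φ in (0 : ℝ)..2 * π,
        Complex.exp (φ * Complex.I) ^ m * (starRingEnd ℂ) (Complex.exp (φ * Complex.I) ^ m') =
      if m = m' then ((2 * π : ℝ) : ℂ) else 0 := by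
  have h : ∀ φ : ℝ,
      Complex.exp (φ * Complex.I) ^ m * (starRingEnd ℂ) (Complex.exp (φ * Complex.I) ^ m') =
        Complex.exp (((m : ℂ) - m') * Complex.I * φ) := fun φ => by
    rw [map_pow, ← Complex.exp_conj, map_mul, Complex.conj_ofReal, Complex.conj_I,
      ← Complex.exp_nat_mul, ← Complex.exp_nat_mul, ← Complex.exp_add]
    ring_nf
  simp_rw [h]
  split_ifs with hm
  · simp [hm]
  · have hc : ((m : ℂ) - m') * Complex.I ≠ 0 :=
      mul_ne_zero (sub_ne_zero.2 (by exact_mod_cast hm)) Complex.I_ne_zero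
    have hperiod : ((m : ℂ) - m') * Complex.I * ((2 * π : ℝ) : ℂ) =
        ((m : ℤ) - m' : ℤ) * (2 * π * Complex.I) := by
      push_cast; ring
    rw [integral_exp_mul_complex hc, hperiod, Complex.exp_int_mul_two_pi_mul_I]
    simp

theorem integral_norm_sq_sum_mul_exp_mul_I_pow (s : Finset ℕ) (a : ℕ → ℂ) :
    ∫ φ in (0 : ℝ)..2 * π, ‖∑ m ∈ s, a m * Complex.exp (φ * Complex.I) ^ m‖ ^ 2 =
      2 * π * ∑ m ∈ s, ‖a m‖ ^ 2 := by
  have hcont : ∀ m m' : ℕ, Continuous fun φ : ℝ => a m * (starRingEnd ℂ) (a m') *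
      (Complex.exp (φ * Complex.I) ^ m * (starRingEnd ℂ) (Complex.exp (φ * Complex.I) ^ m')) :=
    fun m m' => by fun_prop
  have hsq : ∀ φ : ℝ, ((‖∑ m ∈ s, a m * Complex.exp (φ * Complex.I) ^ m‖ ^ 2 : ℝ) : ℂ) =
      ∑ m ∈ s, ∑ m' ∈ s, a m * (starRingEnd ℂ) (a m') *
        (Complex.exp (φ * Complex.I) ^ m * (starRingEnd ℂ) (Complex.exp (φ * Complex.I) ^ m')) := by
    intro φ
    rw [Complex.ofReal_pow, ← Complex.mul_conj', map_sum, sum_mul_sum]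
    simp only [map_mul]
    exact sum_congr rfl fun m _ => sum_congr rfl fun m' _ => by ring
  apply Complex.ofReal_injective
  rw [← intervalIntegral.integral_ofReal]
  simp_rw [hsq]
  rw [intervalIntegral.integral_finsetSum fun m _ =>
    (continuous_finsetSum s fun m' _ => hcont m m').intervalIntegrable _ _]
  simp_rw [intervalIntegral.integral_finsetSum fun m' _ => (hcont _ m').intervalIntegrable _ _,
    intervalIntegral.integral_const_mul, integral_exp_mul_I_pow_mul_conj, mul_ite, mul_zero,
    sum_ite_eq, Complex.mul_conj']
  push_cast
  rw [mul_sum]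
  exact sum_congr rfl fun m hm => by simp [hm]; ring

end Integrals

namespace Polynomial

open Finset

theorem _root_.MvPolynomial.eval_homogenize_eq_sum {R : Type*} [CommSemiring R] (p : R[X])
    (n : ℕ) (x : Fin 2 → R) :
    MvPolynomial.eval x (p.homogenize n) =
      ∑ k ∈ range (n + 1), p.coeff k * x 0 ^ k * x 1 ^ (n - k) := by
  simp only [homogenize, Finset.Nat.sum_antidiagonal_eq_sum_range_succ_mk, MvPolynomial.eval_sum]
  refine sum_congr rfl fun k _ ↦ ?_
  rw [MvPolynomial.eval_monomial, Finsupp.update_eq_add_single, Finsupp.prod_add_index',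
    Finsupp.prod_single_index, Finsupp.prod_single_index]
  · ring
  all_goals simp_all [pow_add]

theorem homogenize_pow {R : Type*} [CommSemiring R] {p : R[X]} {n : ℕ} (hp : p.natDegree ≤ n)
    (s : ℕ) : (p ^ s).homogenize (n * s) = p.homogenize n ^ s := by
  induction s with
  | zero => simp
  | succ s ih =>
    rw [pow_succ, mul_add_one,
      homogenize_mul _ _ ((natDegree_pow_le_of_le s hp).trans_eq (mul_comm _ _)) hp, ih, pow_succ]

theorem coeff_C_mul_X_add_C_pow {R : Type*} [CommSemiring R] (α β : R) (N k : ℕ) :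
    ((C α * X + C β) ^ N).coeff k = N.choose k * α ^ k * β ^ (N - k) := by
  have hterm : ∀ i, (C α * X) ^ i * C β ^ (N - i) * (N.choose i : R[X]) =
      C (N.choose i * α ^ i * β ^ (N - i)) * X ^ i := fun i => by
    rw [mul_pow, ← C_pow, ← C_pow, ← C_eq_natCast, C_mul, C_mul]; ring
  simp only [add_pow, finsetSum_coeff, hterm, coeff_C_mul_X_pow, sum_ite_eq, mem_range]
  split_ifs with hk
  · rfl
  · rw [Nat.choose_eq_zero_of_lt (by omega), Nat.cast_zero, zero_mul, zero_mul]

/-- The squared Bombieri norm of `R` regarded as a binary form of degree `N`. The terms with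
`m > N` would vanish anyway, since then `N.choose m = 0`. -/
noncomputable def bombieriNormSq (N : ℕ) (R : ℂ[X]) : ℝ :=
  ∑ m ∈ range (N + 1), ‖R.coeff m‖ ^ 2 / N.choose m

theorem bombieriNormSq_nonneg (N : ℕ) (R : ℂ[X]) : 0 ≤ bombieriNormSq N R :=
  sum_nonneg fun _ _ => by positivity

theorem bombieriNormSq_C_mul (c : ℂ) (N : ℕ) (R : ℂ[X]) :
    bombieriNormSq N (C c * R) = ‖c‖ ^ 2 * bombieriNormSq N R := by
  rw [bombieriNormSq, bombieriNormSq, mul_sum]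
  simp only [coeff_C_mul, norm_mul, mul_pow, mul_div_assoc]

theorem bombieriNormSq_C_mul_X_add_C_pow (α β : ℂ) (N : ℕ) :
    bombieriNormSq N ((C α * X + C β) ^ N) = (‖α‖ ^ 2 + ‖β‖ ^ 2) ^ N := by
  rw [bombieriNormSq, add_pow (‖α‖ ^ 2)]
  refine sum_congr rfl fun k hk => ?_
  have : (0 : ℝ) < N.choose k := by
    exact_mod_cast Nat.choose_pos (Nat.lt_succ_iff.1 (mem_range.1 hk))
  rw [coeff_C_mul_X_add_C_pow]
  simp only [norm_mul, norm_pow, Complex.norm_natCast]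
  field_simp
  ring

theorem bombieriNormSq_mul_bombieriNormSq (N M : ℕ) (R S : ℂ[X]) :
    bombieriNormSq N R * bombieriNormSq M S = ∑ m ∈ range (N + M + 1),
      ∑ x ∈ antidiagonal m, ‖R.coeff x.1‖ ^ 2 / N.choose x.1 * (‖S.coeff x.2‖ ^ 2 / M.choose x.2) :=
  sum_range_mul_sum_range_eq_sum_antidiagonal (fun i hi => by simp [Nat.choose_eq_zero_of_lt hi])
    (fun j hj => by simp [Nat.choose_eq_zero_of_lt hj])

theorem sum_antidiagonal_mul_choose_add (R S : ℂ[X]) (N M m : ℕ) :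
    (∑ x ∈ antidiagonal m,
        ‖R.coeff x.1‖ ^ 2 / N.choose x.1 * (‖S.coeff x.2‖ ^ 2 / M.choose x.2)) *
        (N + M).choose m =
      (∑ x ∈ antidiagonal m, ((N.choose x.1 * M.choose x.2 : ℕ) : ℝ)) *
        ∑ x ∈ antidiagonal m, ((N.choose x.1 * M.choose x.2 : ℕ) : ℝ) *
          ‖R.coeff x.1 * S.coeff x.2 / (N.choose x.1 * M.choose x.2 : ℕ)‖ ^ 2 := by
  rw [mul_comm]
  congr 1
  · rw [Nat.add_choose_eq]; push_cast; rfl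
  · refine sum_congr rfl fun x _ => ?_
    rw [norm_div, norm_mul, Complex.norm_natCast]
    rcases eq_or_ne (N.choose x.1 * M.choose x.2) 0 with h | h
    · rcases Nat.mul_eq_zero.1 h with h | h <;> simp [h]
    · push_cast at h ⊢
      field_simp

theorem coeff_mul_eq_sum_choose_smul {N M : ℕ} {R S : ℂ[X]} (hR : R.natDegree ≤ N)
    (hS : S.natDegree ≤ M) (m : ℕ) :
    (R * S).coeff m = ∑ x ∈ antidiagonal m, ((N.choose x.1 * M.choose x.2 : ℕ) : ℝ) •
      (R.coeff x.1 * S.coeff x.2 / (N.choose x.1 * M.choose x.2 : ℕ)) := by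
  rw [coeff_mul]
  refine sum_congr rfl fun x _ => ?_
  rw [Complex.real_smul, Complex.ofReal_natCast]
  rcases eq_or_ne (N.choose x.1 * M.choose x.2) 0 with h | h
  · rcases Nat.mul_eq_zero.1 h with h | h
    · rw [coeff_eq_zero_of_natDegree_lt (hR.trans_lt (Nat.choose_eq_zero_iff.1 h))]; simp
    · rw [coeff_eq_zero_of_natDegree_lt (hS.trans_lt (Nat.choose_eq_zero_iff.1 h))]; simp
  · rw [mul_div_cancel₀ _ (by exact_mod_cast h)]

theorem norm_sq_coeff_mul_div_choose_le {N M : ℕ} {R S : ℂ[X]} (hR : R.natDegree ≤ N)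
    (hS : S.natDegree ≤ M) (m : ℕ) :
    ‖(R * S).coeff m‖ ^ 2 / (N + M).choose m ≤ ∑ x ∈ antidiagonal m,
      ‖R.coeff x.1‖ ^ 2 / N.choose x.1 * (‖S.coeff x.2‖ ^ 2 / M.choose x.2) := by
  refine div_le_of_le_mul₀ (Nat.cast_nonneg _) (sum_nonneg fun _ _ => by positivity) ?_
  rw [sum_antidiagonal_mul_choose_add, coeff_mul_eq_sum_choose_smul hR hS]
  exact norm_sq_sum_smul_le (fun _ _ => Nat.cast_nonneg _) _

theorem bombieriNormSq_mul_le {N M : ℕ} {R S : ℂ[X]} (hR : R.natDegree ≤ N)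
    (hS : S.natDegree ≤ M) :
    bombieriNormSq (N + M) (R * S) ≤ bombieriNormSq N R * bombieriNormSq M S := by
  rw [bombieriNormSq_mul_bombieriNormSq]
  exact sum_le_sum fun m _ => norm_sq_coeff_mul_div_choose_le hR hS m

theorem bombieriNormSq_pow_le {N : ℕ} {R : ℂ[X]} (hR : R.natDegree ≤ N) (s : ℕ) :
    bombieriNormSq (N * s) (R ^ s) ≤ bombieriNormSq N R ^ s := by
  induction s with
  | zero => simp [bombieriNormSq]
  | succ s ih =>
    rw [pow_succ, pow_succ, mul_add_one]
    exact (bombieriNormSq_mul_le ((natDegree_pow_le_of_le s hR).trans_eq (mul_comm _ _)) hR).trans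
      (mul_le_mul_of_nonneg_right ih (bombieriNormSq_nonneg N R))

theorem coeff_div_choose_mul_eq_of_bombieriNormSq_mul_eq {N M : ℕ} {R S : ℂ[X]}
    (hR : R.natDegree ≤ N) (hS : S.natDegree ≤ M)
    (h : bombieriNormSq (N + M) (R * S) = bombieriNormSq N R * bombieriNormSq M S)
    {i j i' j' : ℕ} (hi : i ≤ N) (hj : j ≤ M) (hi' : i' ≤ N) (hj' : j' ≤ M)
    (hsum : i + j = i' + j') :
    R.coeff i / N.choose i * (S.coeff j / M.choose j) =
      R.coeff i' / N.choose i' * (S.coeff j' / M.choose j') := by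
  have hC : (0 : ℝ) < (N + M).choose (i + j) := by exact_mod_cast Nat.choose_pos (by omega)
  rw [bombieriNormSq, bombieriNormSq_mul_bombieriNormSq,
    sum_eq_sum_iff_of_le fun m _ => norm_sq_coeff_mul_div_choose_le hR hS m] at h
  have hm := h (i + j) (mem_range.2 (by omega))
  rw [div_eq_iff hC.ne', sum_antidiagonal_mul_choose_add,
    coeff_mul_eq_sum_choose_smul hR hS] at hm
  have hpos : ∀ {k l}, k ≤ N → l ≤ M → (0 : ℝ) < ((N.choose k * M.choose l : ℕ) : ℝ) :=
    fun hk hl => by exact_mod_cast Nat.mul_pos (Nat.choose_pos hk) (Nat.choose_pos hl)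
  have := eq_of_norm_sq_sum_smul_eq (i := (i, j)) (j := (i', j')) (fun _ _ => Nat.cast_nonneg _)
    hm (mem_antidiagonal.2 rfl) (mem_antidiagonal.2 hsum.symm) (hpos hi hj) (hpos hi' hj')
  simpa only [div_mul_div_comm, Nat.cast_mul] using this

theorem bombieriNormSq_mul_self_eq_one_of_pow_eq_one {N : ℕ} {R : ℂ[X]} (hR : R.natDegree ≤ N)
    (hR1 : bombieriNormSq N R = 1) {s : ℕ} (hs : 2 ≤ s)
    (h : bombieriNormSq (N * s) (R ^ s) = 1) : bombieriNormSq (N + N) (R * R) = 1 := by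
  obtain ⟨t, rfl⟩ := Nat.exists_eq_add_of_le hs
  refine le_antisymm ((bombieriNormSq_mul_le hR hR).trans_eq (by simp [hR1])) ?_
  calc 1 = bombieriNormSq (N + N + N * t) (R * R * R ^ t) := by
        rw [← h, ← pow_two, ← pow_add, mul_add, mul_two]
    _ ≤ bombieriNormSq (N + N) (R * R) * bombieriNormSq (N * t) (R ^ t) :=
        bombieriNormSq_mul_le (natDegree_mul_le_of_le hR hR)
          ((natDegree_pow_le_of_le t hR).trans_eq (mul_comm _ _))
    _ ≤ bombieriNormSq (N + N) (R * R) * 1 := by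
        gcongr
        · exact bombieriNormSq_nonneg _ _
        · exact (bombieriNormSq_pow_le hR t).trans_eq (by rw [hR1, one_pow])
    _ = bombieriNormSq (N + N) (R * R) := mul_one _

theorem exists_eq_C_mul_C_mul_X_add_C_pow_of_bombieriNormSq_mul_self_eq {n : ℕ} {Q : ℂ[X]}
    (hQ : Q.natDegree ≤ n)
    (h : bombieriNormSq (n + n) (Q * Q) = bombieriNormSq n Q * bombieriNormSq n Q) :
    ∃ c α β : ℂ, Q = C c * (C α * X + C β) ^ n := by
  obtain ⟨c, α, β, hu⟩ := exists_eq_mul_pow_mul_pow_of_mul_succ_eq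
    (u := fun k => Q.coeff k / n.choose k) fun i j hi hj =>
      coeff_div_choose_mul_eq_of_bombieriNormSq_mul_eq hQ hQ h hi hj.le hi.le hj (by omega)
  refine ⟨c, α, β, ext fun k => ?_⟩
  rw [coeff_C_mul, coeff_C_mul_X_add_C_pow]
  rcases le_or_gt k n with hk | hk
  · have hC : (n.choose k : ℂ) ≠ 0 := by exact_mod_cast (Nat.choose_pos hk).ne'
    rw [← div_mul_cancel₀ (Q.coeff k) hC, hu k hk]
    ring
  · rw [coeff_eq_zero_of_natDegree_lt (hQ.trans_lt hk), Nat.choose_eq_zero_of_lt hk]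
    simp

end Polynomial

section CoherentStates

open Finset Polynomial Real

noncomputable def majoranaPoly (n : ℕ) (ψ : EuclideanSpace ℂ (Fin (n + 1))) : ℂ[X] :=
  ∑ k : Fin (n + 1), C (√(n.choose k) * ψ k) * X ^ (k : ℕ)

noncomputable def blochSpinor (Ω : ℝ × ℝ) : Fin 2 → ℂ :=
  ![√Ω.1 * Complex.exp (Ω.2 * Complex.I), √(1 - Ω.1)]

variable {n : ℕ}

theorem coeff_majoranaPoly (ψ : EuclideanSpace ℂ (Fin (n + 1))) (k : Fin (n + 1)) :
    (majoranaPoly n ψ).coeff k = √(n.choose k) * ψ k := by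
  simp only [majoranaPoly, finsetSum_coeff, coeff_C_mul_X_pow, Fin.val_inj, sum_ite_eq, mem_univ,
    if_true]

theorem natDegree_majoranaPoly_le (ψ : EuclideanSpace ℂ (Fin (n + 1))) :
    (majoranaPoly n ψ).natDegree ≤ n :=
  natDegree_sum_le_of_forall_le _ _ fun k _ =>
    (natDegree_C_mul_X_pow_le _ _).trans (Nat.lt_succ_iff.1 k.2)

theorem majoranaPoly_smul (c : ℂ) (ψ : EuclideanSpace ℂ (Fin (n + 1))) :
    majoranaPoly n (c • ψ) = C c * majoranaPoly n ψ := by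
  simp only [majoranaPoly, mul_sum, ← mul_assoc, ← C_mul, PiLp.smul_apply, smul_eq_mul,
    mul_left_comm c]

theorem majoranaPoly_injective : Function.Injective (majoranaPoly n) := by
  intro ψ ψ' h
  ext k
  have hk := congrArg (coeff · k) h
  simp only [coeff_majoranaPoly] at hk
  refine mul_left_cancel₀ ?_ hk
  exact_mod_cast (Real.sqrt_pos.2 (by exact_mod_cast Nat.choose_pos (Nat.lt_succ_iff.1 k.2))).ne'

theorem bombieriNormSq_majoranaPoly (ψ : EuclideanSpace ℂ (Fin (n + 1))) :
    bombieriNormSq n (majoranaPoly n ψ) = ‖ψ‖ ^ 2 := by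
  rw [bombieriNormSq, EuclideanSpace.norm_sq_eq, ← Fin.sum_univ_eq_sum_range]
  refine sum_congr rfl fun k _ => ?_
  have : (0 : ℝ) < n.choose k := by exact_mod_cast Nat.choose_pos (Nat.lt_succ_iff.1 k.2)
  rw [coeff_majoranaPoly, norm_mul, Complex.norm_real, Real.norm_of_nonneg (Real.sqrt_nonneg _),
    mul_pow, Real.sq_sqrt this.le]
  field_simp

theorem majoranaPoly_bloch (Ω : ℝ × ℝ) :
    majoranaPoly n (bloch n Ω) =
      (C (√Ω.1 * Complex.exp (-Ω.2 * Complex.I)) * X + C (√(1 - Ω.1) : ℂ)) ^ n := by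
  ext k
  rw [coeff_C_mul_X_add_C_pow]
  rcases le_or_gt k n with hk | hk
  · have hcoeff := coeff_majoranaPoly (bloch n Ω) ⟨k, Nat.lt_succ_iff.2 hk⟩
    simp only at hcoeff
    have hC : ((√(n.choose k) : ℝ) : ℂ) * (√(n.choose k) : ℝ) = n.choose k := by
      rw [← Complex.ofReal_mul, Real.mul_self_sqrt (Nat.cast_nonneg _), Complex.ofReal_natCast]
    have hexp : Complex.exp (-(k : ℂ) * Complex.I * Ω.2) = Complex.exp (-Ω.2 * Complex.I) ^ k := by
      rw [← Complex.exp_nat_mul]; ring_nf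
    rw [hcoeff, bloch, PiLp.toLp_apply]
    push_cast
    rw [hexp, ← hC]
    ring
  · rw [coeff_eq_zero_of_natDegree_lt ((natDegree_majoranaPoly_le _).trans_lt hk),
      Nat.choose_eq_zero_of_lt hk]
    simp

theorem ov_eq_eval_homogenize (Ω : ℝ × ℝ) (ψ : EuclideanSpace ℂ (Fin (n + 1))) :
    ov n Ω ψ = MvPolynomial.eval (blochSpinor Ω) ((majoranaPoly n ψ).homogenize n) := by
  rw [MvPolynomial.eval_homogenize_eq_sum, ← Fin.sum_univ_eq_sum_range (fun k =>
    (majoranaPoly n ψ).coeff k * _ ^ k * _ ^ (n - k)), ov, PiLp.inner_apply]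
  refine sum_congr rfl fun k _ => ?_
  have hexp : Complex.exp (k * Complex.I * Ω.2) = Complex.exp (Ω.2 * Complex.I) ^ (k : ℕ) := by
    rw [← Complex.exp_nat_mul]; ring_nf
  rw [coeff_majoranaPoly, RCLike.inner_apply', bloch, PiLp.toLp_apply, map_mul,
    Complex.conj_ofReal, ← Complex.exp_conj]
  simp only [blochSpinor, map_mul, map_neg, map_natCast, Complex.conj_I, Complex.conj_ofReal,
    neg_mul, mul_neg, neg_neg, Matrix.cons_val_zero, Matrix.cons_val_one]
  push_cast
  rw [hexp]
  ring

theorem norm_sq_sqrt_mul_exp_add_norm_sq_sqrt {p : ℝ} (hp : p ∈ Set.Icc (0 : ℝ) 1) (φ : ℝ) :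
    ‖(√p : ℂ) * Complex.exp (-φ * Complex.I)‖ ^ 2 + ‖(√(1 - p) : ℂ)‖ ^ 2 = 1 := by
  rw [norm_mul, ← Complex.ofReal_neg, Complex.norm_exp_ofReal_mul_I, mul_one, Complex.norm_real,
    Complex.norm_real, Real.norm_of_nonneg (Real.sqrt_nonneg _),
    Real.norm_of_nonneg (Real.sqrt_nonneg _), Real.sq_sqrt hp.1, Real.sq_sqrt (sub_nonneg.2 hp.2)]
  ring

theorem norm_bloch {Ω : ℝ × ℝ} (hΩ : Ω.1 ∈ Set.Icc (0 : ℝ) 1) : ‖bloch n Ω‖ = 1 := by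
  have h := bombieriNormSq_majoranaPoly (bloch n Ω)
  rw [majoranaPoly_bloch, bombieriNormSq_C_mul_X_add_C_pow,
    norm_sq_sqrt_mul_exp_add_norm_sq_sqrt hΩ, one_pow, eq_comm,
    pow_eq_one_iff_of_nonneg (norm_nonneg _) two_ne_zero] at h
  exact h

theorem isCoherent_of_eq_smul_bloch {ψ : EuclideanSpace ℂ (Fin (n + 1))} {Ω : ℝ × ℝ}
    (hΩ : IsSpherePt Ω) {c : ℂ} (hc : ψ = c • bloch n Ω) (hψ : ‖ψ‖ = 1) : IsCoherent n ψ := by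
  rw [hc, norm_smul, norm_bloch hΩ.1, mul_one] at hψ
  refine ⟨c.arg, Ω, hΩ, ?_⟩
  rw [hc]
  congr 1
  simpa [hψ] using (Complex.norm_mul_exp_arg_mul_I c).symm

theorem exists_mem_Ico_eq_norm_mul_exp_neg_mul_I (z : ℂ) :
    ∃ φ ∈ Set.Ico 0 (2 * π), z = ‖z‖ * Complex.exp (-φ * Complex.I) := by
  have hper : Function.Periodic (fun φ : ℝ => Complex.exp (-φ * Complex.I)) (2 * π) := fun φ => by
    simp only [Complex.ofReal_add, Complex.ofReal_mul, Complex.ofReal_ofNat, neg_add, add_mul,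
      Complex.exp_add, neg_mul, Complex.exp_neg (2 * π * Complex.I), Complex.exp_two_pi_mul_I,
      inv_one, mul_one]
  obtain ⟨φ, hφ, h⟩ := hper.exists_mem_Ico₀ two_pi_pos (-z.arg)
  refine ⟨φ, hφ, ?_⟩
  simp only [Complex.ofReal_neg, neg_neg] at h
  rw [← h, Complex.norm_mul_exp_arg_mul_I]

/-- Normalizing `(α, β)`, take `p = |α|² / (|α|² + |β|²)`; the phase of `β` goes into `σ`
and the remaining relative phase into `φ`. -/
theorem exists_isSpherePt_eq_smul (α β : ℂ) : ∃ Ω, IsSpherePt Ω ∧ ∃ σ : ℂ,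
    α = σ * (√Ω.1 * Complex.exp (-Ω.2 * Complex.I)) ∧ β = σ * √(1 - Ω.1) := by
  rcases eq_or_ne (‖α‖ ^ 2 + ‖β‖ ^ 2) 0 with h0 | h0
  · have hα : α = 0 := by simpa using (by nlinarith [sq_nonneg ‖α‖, sq_nonneg ‖β‖] : ‖α‖ ^ 2 = 0)
    have hβ : β = 0 := by simpa using (by nlinarith [sq_nonneg ‖α‖, sq_nonneg ‖β‖] : ‖β‖ ^ 2 = 0)
    exact ⟨(0, 0), ⟨⟨le_rfl, zero_le_one⟩, le_rfl, two_pi_pos⟩, 0, by simp [hα, hβ]⟩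
  set d := √(‖α‖ ^ 2 + ‖β‖ ^ 2)
  have hd : 0 < d := Real.sqrt_pos.2 (lt_of_le_of_ne (by positivity) h0.symm)
  have hd2 : d ^ 2 = ‖α‖ ^ 2 + ‖β‖ ^ 2 := Real.sq_sqrt (by positivity)
  have hdC : (d : ℂ) ≠ 0 := by exact_mod_cast hd.ne'
  set ω := Complex.exp (β.arg * Complex.I)
  have hω : ‖ω‖ = 1 := Complex.norm_exp_ofReal_mul_I _
  have hω0 : ω ≠ 0 := Complex.exp_ne_zero _
  obtain ⟨φ, hφ, hpolar⟩ := exists_mem_Ico_eq_norm_mul_exp_neg_mul_I (α * ω⁻¹)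
  rw [norm_mul, norm_inv, hω, inv_one, mul_one, mul_inv_eq_iff_eq_mul₀ hω0] at hpolar
  have hsqrt : √(‖α‖ ^ 2 / d ^ 2) = ‖α‖ / d := by
    rw [Real.sqrt_div' _ (sq_nonneg _), Real.sqrt_sq (norm_nonneg _), Real.sqrt_sq hd.le]
  have hsqrt' : √(1 - ‖α‖ ^ 2 / d ^ 2) = ‖β‖ / d := by
    rw [show 1 - ‖α‖ ^ 2 / d ^ 2 = ‖β‖ ^ 2 / d ^ 2 by field_simp; linarith,
      Real.sqrt_div' _ (sq_nonneg _), Real.sqrt_sq (norm_nonneg _), Real.sqrt_sq hd.le]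
  refine ⟨(‖α‖ ^ 2 / d ^ 2, φ), ⟨⟨by positivity,
    div_le_one_of_le₀ (by linarith [sq_nonneg ‖β‖]) (sq_nonneg _)⟩, hφ⟩, d * ω, ?_, ?_⟩
  · dsimp only
    rw [hsqrt]
    conv_lhs => rw [hpolar]
    push_cast
    field_simp
  · dsimp only
    rw [hsqrt']
    conv_lhs => rw [← Complex.norm_mul_exp_arg_mul_I β]
    push_cast
    field_simp
    rfl

theorem isCoherent_of_bombieriNormSq_mul_self_eq_one {ψ : EuclideanSpace ℂ (Fin (n + 1))}
    (hψ : ‖ψ‖ = 1) (h : bombieriNormSq (n + n) (majoranaPoly n ψ * majoranaPoly n ψ) = 1) :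
    IsCoherent n ψ := by
  have hQ1 : bombieriNormSq n (majoranaPoly n ψ) = 1 := by
    rw [bombieriNormSq_majoranaPoly, hψ, one_pow]
  obtain ⟨c, α, β, hQ⟩ := exists_eq_C_mul_C_mul_X_add_C_pow_of_bombieriNormSq_mul_self_eq
    (natDegree_majoranaPoly_le ψ) (by rw [h, hQ1, one_mul])
  obtain ⟨Ω, hΩ, σ, rfl, rfl⟩ := exists_isSpherePt_eq_smul α β
  refine isCoherent_of_eq_smul_bloch hΩ (c := c * σ ^ n) (majoranaPoly_injective ?_) hψ
  have hσ : ∀ a b : ℂ, C (σ * a) * X + C (σ * b) = C σ * (C a * X + C b) := fun a b => by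
    simp only [C_mul]; ring
  rw [hQ, hσ, mul_pow, majoranaPoly_smul, majoranaPoly_bloch]
  simp only [map_mul, map_pow]
  ring

theorem bombieriNormSq_majoranaPoly_pow_of_isCoherent {ψ : EuclideanSpace ℂ (Fin (n + 1))}
    (h : IsCoherent n ψ) (s : ℕ) : bombieriNormSq (n * s) (majoranaPoly n ψ ^ s) = 1 := by
  obtain ⟨θ, Ω, hΩ, rfl⟩ := h
  rw [majoranaPoly_smul, majoranaPoly_bloch, mul_pow, ← C_pow, ← pow_mul, bombieriNormSq_C_mul,
    bombieriNormSq_C_mul_X_add_C_pow, norm_sq_sqrt_mul_exp_add_norm_sq_sqrt hΩ.1, norm_pow,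
    Complex.norm_exp_ofReal_mul_I]
  simp

theorem sphereInt_norm_sq_eval_homogenize (N : ℕ) (R : ℂ[X]) :
    sphereInt (fun Ω => ‖MvPolynomial.eval (blochSpinor Ω) (R.homogenize N)‖ ^ 2) =
      R.bombieriNormSq N / (N + 1) := by
  have hφ : Set.EqOn
      (fun p => (∫ φ in (0 : ℝ)..2 * π,
        ‖MvPolynomial.eval (blochSpinor (p, φ)) (R.homogenize N)‖ ^ 2) / (2 * π))
      (fun p => ∑ m ∈ range (N + 1), ‖R.coeff m‖ ^ 2 * (p ^ m * (1 - p) ^ (N - m)))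
      (Set.uIcc 0 1) := by
    intro p hp
    rw [Set.uIcc_of_le zero_le_one] at hp
    have hsum : ∀ φ : ℝ, MvPolynomial.eval (blochSpinor (p, φ)) (R.homogenize N) =
        ∑ m ∈ range (N + 1), R.coeff m * √p ^ m * √(1 - p) ^ (N - m) *
          Complex.exp (φ * Complex.I) ^ m := fun φ => by
      rw [MvPolynomial.eval_homogenize_eq_sum]
      exact sum_congr rfl fun m _ => by
        simp only [blochSpinor, Matrix.cons_val_zero, Matrix.cons_val_one]; ring
    simp only [hsum, integral_norm_sq_sum_mul_exp_mul_I_pow, norm_mul, norm_pow, Complex.norm_real,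
      Real.norm_of_nonneg (Real.sqrt_nonneg _), mul_pow]
    rw [mul_div_cancel_left₀ _ (by positivity)]
    refine sum_congr rfl fun m _ => ?_
    rw [← pow_mul, ← pow_mul, pow_mul', pow_mul' (Real.sqrt _), Real.sq_sqrt hp.1,
      Real.sq_sqrt (sub_nonneg.2 hp.2), mul_assoc]
  rw [sphereInt, intervalIntegral.integral_congr hφ, intervalIntegral.integral_finsetSum
    fun m _ => (by fun_prop : Continuous fun p : ℝ =>
      ‖R.coeff m‖ ^ 2 * (p ^ m * (1 - p) ^ (N - m))).intervalIntegrable _ _,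
    bombieriNormSq, sum_div]
  refine sum_congr rfl fun m hm => ?_
  have hm : m ≤ N := Nat.lt_succ_iff.1 (mem_range.1 hm)
  rw [intervalIntegral.integral_const_mul, integral_pow_mul_one_sub_pow, Nat.add_sub_cancel' hm,
    Nat.factorial_succ, ← Nat.choose_mul_factorial_mul_factorial hm]
  have := Nat.choose_pos hm
  have := Nat.factorial_pos m
  have := Nat.factorial_pos (N - m)
  push_cast
  field_simp

theorem mul_sphereInt_norm_ov_pow (s : ℕ) (ψ : EuclideanSpace ℂ (Fin (n + 1))) :
    ((n : ℝ) * s + 1) * sphereInt (fun Ω => ‖ov n Ω ψ‖ ^ (2 * s)) =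
      bombieriNormSq (n * s) (majoranaPoly n ψ ^ s) := by
  have h : (fun Ω => ‖ov n Ω ψ‖ ^ (2 * s)) = fun Ω =>
      ‖MvPolynomial.eval (blochSpinor Ω) ((majoranaPoly n ψ ^ s).homogenize (n * s))‖ ^ 2 :=
    funext fun Ω => by
      rw [ov_eq_eval_homogenize, homogenize_pow (natDegree_majoranaPoly_le ψ), map_pow, norm_pow,
        ← pow_mul, mul_comm s 2]
  rw [h, sphereInt_norm_sq_eval_homogenize]
  push_cast
  field_simp

end CoherentStates

theorem lieb_inequality_integer_powers_general (n : ℕ) (s : ℕ)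
    (ψ : EuclideanSpace ℂ (Fin (n + 1))) (hψ : ‖ψ‖ = 1) :
    ((n : ℝ) * (s : ℝ) + 1) * sphereInt (fun Ω => ‖ov n Ω ψ‖ ^ (2 * s)) ≤ 1 ∧
      (2 ≤ s →
        (((n : ℝ) * (s : ℝ) + 1) * sphereInt (fun Ω => ‖ov n Ω ψ‖ ^ (2 * s)) = 1 ↔
          IsCoherent n ψ)) := by
  have hQ := natDegree_majoranaPoly_le ψ
  have hQ1 : Polynomial.bombieriNormSq n (majoranaPoly n ψ) = 1 := by
    rw [bombieriNormSq_majoranaPoly, hψ, one_pow]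
  rw [mul_sphereInt_norm_ov_pow]
  refine ⟨(Polynomial.bombieriNormSq_pow_le hQ s).trans_eq (by rw [hQ1, one_pow]),
    fun hs => ⟨fun h => ?_, fun h => bombieriNormSq_majoranaPoly_pow_of_isCoherent h s⟩⟩
  exact isCoherent_of_bombieriNormSq_mul_self_eq_one hψ
    (Polynomial.bombieriNormSq_mul_self_eq_one_of_pow_eq_one hQ hQ1 hs h)

/-- Generalized Lieb inequality for integer powers `s ≥ 1`, with
the equality characterization for `s ≥ 2`. -/
theorem lieb_inequality_integer_powers (n : ℕ) (s : ℕ) (hs : 1 ≤ s)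
    (ψ : EuclideanSpace ℂ (Fin (n + 1))) (hψ : ‖ψ‖ = 1) :
    ((n : ℝ) * (s : ℝ) + 1) * sphereInt (fun Ω => ‖ov n Ω ψ‖ ^ (2 * s)) ≤ 1 ∧
      (2 ≤ s →
        (((n : ℝ) * (s : ℝ) + 1) * sphereInt (fun Ω => ‖ov n Ω ψ‖ ^ (2 * s)) = 1 ↔
          IsCoherent n ψ)) :=
  lieb_inequality_integer_powers_general n s ψ hψ
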